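/- Let S_0 = ℚ[x₁,…,xₙ] and let S = S_0[t]/(t^N) (a graded S_0-algebra with nilpotent part, modeling H*(F) ⊗ H*(BT) with F of bounded cohomological dimension). Let e₁,…,e_k ∈ S be elements whose degree-0 components (coefficients of t^0) are pairwise coprime nonzero elements of S_0. If y ∈ S is divisible by each e_j, then y is divisible by the product e₁⋯e_k. -/

import Mathlib

open Polynomial

/-- If `e * a = X^N * v` over a domain and `e.coeff 0 ≠ 0`, then `e.coeff 0 ∣ v.coeff 0`. -/
lemma key_div {R : Type*} [CommRing R] [IsDomain R] {e a v : R[X]} {N : ℕ}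
    (he : e.coeff 0 ≠ 0) (h : e * a = X ^ N * v) : e.coeff 0 ∣ v.coeff 0 := by
  have hstep : ∀ i ≤ N, (X : R[X]) ^ i ∣ a := by
    intro i hi
    induction i with
    | zero => simp
    | succ i ih =>
      obtain ⟨b, rfl⟩ := ih (le_of_lt (Nat.lt_of_succ_le hi))
      have hNi : N = i + (N - i) := by omega
      have hX : (X : R[X]) ^ i ≠ 0 := pow_ne_zero _ X_ne_zero
      have h2 : e * b = X ^ (N - i) * v := by
        have hh : X ^ i * (e * b) = X ^ i * (X ^ (N - i) * v) := by
          calc X ^ i * (e * b) = e * (X ^ i * b) := by ring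
          _ = X ^ N * v := h
          _ = X ^ i * (X ^ (N - i) * v) := by rw [← mul_assoc, ← pow_add, ← hNi]
        exact mul_left_cancel₀ hX hh
      have hc : e.coeff 0 * b.coeff 0 = 0 := by
        have hcc := congrArg (fun p => Polynomial.coeff p 0) h2
        simp only [mul_coeff_zero, coeff_X_pow] at hcc
        rw [if_neg (by omega : ¬ (0 : ℕ) = N - i)] at hcc
        simpa using hcc
      have hb0 : b.coeff 0 = 0 := by
        rcases mul_eq_zero.mp hc with h' | h'
        · exact absurd h' he
        · exact h' 
      obtain ⟨c, rfl⟩ := X_dvd_iff.mpr hb0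
      exact ⟨c, by ring⟩
  obtain ⟨b, rfl⟩ := hstep N le_rfl
  have hX : (X : R[X]) ^ N ≠ 0 := pow_ne_zero _ X_ne_zero
  have h2 : e * b = v := by
    apply mul_left_cancel₀ hX
    rw [← h]; ring
  exact ⟨b.coeff 0, by rw [← h2, mul_coeff_zero]⟩

/-- Lemma 4.2 in the model S = ℚ[x₁,…,xₙ][t]/(tᴺ): if the degree-zero
(coefficient of t⁰) components of e₁,…,e_k are pairwise coprime and nonzero,
then divisibility of y by each e_j implies divisibility by the product. -/
theorem stmt_2 (n N k : ℕ)
    (E : Fin k → Polynomial (MvPolynomial (Fin n) ℚ))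
    (Y : Polynomial (MvPolynomial (Fin n) ℚ))
    (h0 : ∀ j, (E j).coeff 0 ≠ 0)
    (hcop : ∀ i j, i ≠ j → IsRelPrime ((E i).coeff 0) ((E j).coeff 0))
    (hdvd : ∀ j, (Ideal.Quotient.mk (Ideal.span {(Polynomial.X : Polynomial (MvPolynomial (Fin n) ℚ)) ^ N}) (E j)) ∣
      Ideal.Quotient.mk (Ideal.span {(Polynomial.X : Polynomial (MvPolynomial (Fin n) ℚ)) ^ N}) Y) :
    (Ideal.Quotient.mk (Ideal.span {(Polynomial.X : Polynomial (MvPolynomial (Fin n) ℚ)) ^ N}) (∏ j, E j)) ∣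
      Ideal.Quotient.mk (Ideal.span {(Polynomial.X : Polynomial (MvPolynomial (Fin n) ℚ)) ^ N}) Y := by
  set R := MvPolynomial (Fin n) ℚ
  -- translate divisibility in quotient to divisibility statement in R[X]
  have key : ∀ (M : ℕ) (a y : R[X]),
      ((Ideal.Quotient.mk (Ideal.span {(X : R[X]) ^ M})) a ∣
        Ideal.Quotient.mk (Ideal.span {(X : R[X]) ^ M}) y)
      ↔ ∃ c, (X : R[X]) ^ M ∣ y - a * c := by
    intro M a y
    constructor
    · rintro ⟨c, hc⟩
      obtain ⟨c', rfl⟩ := Ideal.Quotient.mk_surjective c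
      refine ⟨c', ?_⟩
      rw [← Ideal.mem_span_singleton, ← Ideal.Quotient.eq_zero_iff_mem, map_sub, map_mul, hc,
        sub_self]
    · rintro ⟨c, hc⟩
      refine ⟨Ideal.Quotient.mk _ c, ?_⟩
      rw [← map_mul, eq_comm, Ideal.Quotient.mk_eq_mk_iff_sub_mem, Ideal.mem_span_singleton]
      exact dvd_sub_comm.mp hc
  rw [key]
  replace hdvd := fun j => (key N (E j) Y).mp (hdvd j)
  -- main induction on N
  clear key
  induction N with
  | zero => exact ⟨0, by simp⟩
  | succ N ih =>
    obtain ⟨q, w, hw⟩ : ∃ q w, Y - (∏ j, E j) * q = X ^ N * w := by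
      obtain ⟨q, hq⟩ := ih (fun j => by
        obtain ⟨c, hc⟩ := hdvd j
        exact ⟨c, dvd_trans (pow_dvd_pow _ (Nat.le_succ N)) hc⟩)
      obtain ⟨w, hw⟩ := hq
      exact ⟨q, w, hw⟩
    -- for each j, E j's constant coeff divides w.coeff 0
    have hdvd0 : ∀ j, (E j).coeff 0 ∣ w.coeff 0 := by
      intro j
      obtain ⟨c, s, hs⟩ := hdvd j
      -- E j * (c - (∏ E / E j) * q) = X^N * (w - X * s)
      have hprod : (∏ i, E i) = E j * ∏ i ∈ Finset.univ.erase j, E i := by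
        rw [Finset.mul_prod_erase _ _ (Finset.mem_univ j)]
      have heq : E j * (c - (∏ i ∈ Finset.univ.erase j, E i) * q) = X ^ N * (w - X * s) := by
        have h1 : Y - E j * c = X ^ (N + 1) * s := hs
        have h2 : Y - (∏ j, E j) * q = X ^ N * w := hw
        rw [hprod] at h2
        linear_combination h2 - h1
      have := key_div (h0 j) heq
      simpa using this
    have hd : (∏ j, (E j).coeff 0) ∣ w.coeff 0 :=
      Fintype.prod_dvd_of_isRelPrime (fun i j hij => hcop i j hij) hdvd0
    obtain ⟨d, hd⟩ := hd
    refine ⟨q + C d * X ^ N, ?_⟩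
    have : Y - (∏ j, E j) * (q + C d * X ^ N) = X ^ N * (w - (∏ j, E j) * C d) := by
      linear_combination hw
    rw [this, pow_succ]
    refine mul_dvd_mul_left _ (X_dvd_iff.mpr ?_)
    rw [coeff_sub, mul_coeff_zero, coeff_C_zero]
    have hc0 : constantCoeff (∏ j, E j) = ∏ j, constantCoeff (E j) :=
      map_prod (constantCoeff : R[X] →+* R) E Finset.univ
    simp only [constantCoeff_apply] at hc0
    rw [hc0, ← hd, sub_self]
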